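/- Let I be an ideal of a noetherian ring R and M any R-module. Then Ass_R(M/Γ_I(M)) = Ass_R(M) ∩ (Spec(R) \ V(I)), i.e., the associated primes of M/Γ_I(M) are exactly the associated primes of M that do not contain I. -/

import Mathlib

open CategoryTheory

universe u

/-- The `I`-torsion submodule `Γ_I(M)`. -/
def gammaTorsion {R : Type u} [CommRing R] (I : Ideal R) (M : Type u) [AddCommGroup M]
    [Module R M] : Submodule R M where
  carrier := {m | ∃ n : ℕ, ∀ r ∈ I ^ n, r • m = 0}
  zero_mem' := ⟨0, fun r _ => smul_zero r⟩
  add_mem' := by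
    rintro a b ⟨n, hn⟩ ⟨k, hk⟩
    refine ⟨n + k, fun r hr => ?_⟩
    rw [smul_add, hn r (Ideal.pow_le_pow_right (Nat.le_add_right n k) hr),
      hk r (Ideal.pow_le_pow_right (Nat.le_add_left k n) hr), add_zero]
  smul_mem' := by
    rintro c a ⟨n, hn⟩
    exact ⟨n, fun r hr => by rw [smul_comm, hn r hr, smul_zero]⟩

/-- The depth of `M` with respect to the ideal `I`: the supremum of the lengths of
regular sequences on `M` consisting of elements of `I`. -/
noncomputable def idealDepth {R : Type u} [CommRing R] (I : Ideal R) (M : Type u)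
    [AddCommGroup M] [Module R M] : ℕ∞ :=
  sSup {n : ℕ∞ | ∃ rs : List R, (rs.length : ℕ∞) = n ∧ (∀ r ∈ rs, r ∈ I) ∧
    RingTheory.Sequence.IsRegular M rs}

/-- The height of an ideal: the infimum of the heights of the primes containing it. -/
noncomputable def idealHeight {R : Type u} [CommRing R] (I : Ideal R) : ℕ∞ :=
  ⨅ p ∈ {p : PrimeSpectrum R | I ≤ p.asIdeal}, Order.height p

/-- A local Cohen–Macaulay ring: a noetherian local ring whose depth (of the maximal
ideal) equals its Krull dimension. -/
def IsCMLocalRing (R : Type u) [CommRing R] : Prop :=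
  IsNoetherianRing R ∧ ∃ _ : IsLocalRing R,
    (idealDepth (IsLocalRing.maximalIdeal R) R : WithBot ℕ∞) = ringKrullDim R

/-!
An element `m̄` of `M/Γ_I(M)` is killed by `r` iff some power `I^n` kills `r m`. For a prime
`p ⊉ I`, choosing `s ∈ I^n \ p` shows that `p` contains `Ann(m̄)` as soon as it contains `Ann(m)`.
Conversely, if `p = Ann(m̄)`, the finite generation of `p` gives a single `n` with `I^n p m = 0`;
this rules out `I ⊆ p`, which would put `m` in `Γ_I(M)`, and for `s ∈ I^n \ p` it gives
`p = Ann(s m)`.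
-/

open Submodule

section

variable {R M : Type*} [CommRing R] [AddCommGroup M] [Module R M] {I p : Ideal R}

theorem Ideal.exists_mem_pow_notMem_of_not_le [p.IsPrime] (h : ¬ I ≤ p) (n : ℕ) :
    ∃ s ∈ I ^ n, s ∉ p :=
  SetLike.not_le_iff_exists.mp fun hle => h (Ideal.IsPrime.le_of_pow_le hle)

theorem Submodule.bot_colon_mk (N : Submodule R M) (m : M) :
    (⊥ : Submodule R (M ⧸ N)).colon {Quotient.mk m} = N.colon {m} := by
  ext r
  rw [mem_colon_singleton, mem_colon_singleton, mem_bot, ← Quotient.mk_smul, Quotient.mk_eq_zero]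

theorem Submodule.eq_bot_colon_smul_of_eq_colon [hp : p.IsPrime] {N : Submodule R M} {m : M}
    (hpm : p = N.colon {m}) {s : R} (hs : s ∉ p) (hsp : ∀ r ∈ p, (s * r) • m = 0) :
    p = (⊥ : Submodule R M).colon {s • m} := by
  ext r
  rw [mem_colon_singleton, mem_bot, smul_smul]
  constructor
  · intro hr
    rw [mul_comm]
    exact hsp r hr
  · intro hr
    have hrs : r * s ∈ p := by
      rw [hpm, mem_colon_singleton, hr]
      exact N.zero_mem
    exact (hp.mem_or_mem hrs).resolve_right hs

end

section

variable {R M : Type u} [CommRing R] [AddCommGroup M] [Module R M] {I p : Ideal R}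

theorem colon_gammaTorsion_le_of_bot_colon_le [hp : p.IsPrime] (hI : ¬ I ≤ p) {m : M}
    (hm : (⊥ : Submodule R M).colon {m} ≤ p) : (gammaTorsion I M).colon {m} ≤ p := by
  intro r hr
  obtain ⟨n, hn⟩ := mem_colon_singleton.mp hr
  obtain ⟨s, hs, hsp⟩ := Ideal.exists_mem_pow_notMem_of_not_le hI n
  have hsr : s * r ∈ p := hm <| by
    rw [mem_colon_singleton, mem_bot, mul_smul]
    exact hn s hs
  exact (hp.mem_or_mem hsr).resolve_left hsp

theorem exists_pow_mul_le_bot_colon_of_le_colon_gammaTorsion {J : Ideal R} (hJ : J.FG) {m : M}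
    (h : J ≤ (gammaTorsion I M).colon {m}) :
    ∃ n, I ^ n * J ≤ (⊥ : Submodule R M).colon {m} := by
  induction J, hJ using Submodule.fg_induction with
  | singleton x =>
    obtain ⟨n, hn⟩ := mem_colon_singleton.mp (h (mem_span_singleton_self x))
    refine ⟨n, mul_le.mpr fun r hr a ha => ?_⟩
    obtain ⟨c, rfl⟩ := Ideal.mem_span_singleton'.mp ha
    rw [mem_colon_singleton, mem_bot, mul_left_comm, mul_smul, mul_smul, hn r hr, smul_zero]
  | sup J₁ J₂ _ _ ih₁ ih₂ =>
    obtain ⟨n₁, hn₁⟩ := ih₁ (le_sup_left.trans h)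
    obtain ⟨n₂, hn₂⟩ := ih₂ (le_sup_right.trans h)
    refine ⟨n₁ + n₂, mul_sup (I ^ (n₁ + n₂)) J₁ J₂ ▸ sup_le ?_ ?_⟩
    · exact (Ideal.mul_mono_left (Ideal.pow_le_pow_right (Nat.le_add_right n₁ n₂))).trans hn₁
    · exact (Ideal.mul_mono_left (Ideal.pow_le_pow_right (Nat.le_add_left n₂ n₁))).trans hn₂

theorem not_le_of_eq_colon_gammaTorsion [hp : p.IsPrime] {m : M}
    (hpm : p = (gammaTorsion I M).colon {m}) {n : ℕ}
    (hn : I ^ n * p ≤ (⊥ : Submodule R M).colon {m}) : ¬ I ≤ p := by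
  intro hIp
  refine hp.ne_top ?_
  rw [hpm, colon_eq_top_iff_subset, Set.singleton_subset_iff]
  refine ⟨n + 1, fun r hr => ?_⟩
  rw [pow_succ] at hr
  exact (mem_bot R).mp (mem_colon_singleton.mp (hn (Ideal.mul_mono_right hIp hr)))

theorem IsAssociatedPrime.quotient_gammaTorsion (h : IsAssociatedPrime p M) (hI : ¬ I ≤ p) :
    IsAssociatedPrime p (M ⧸ gammaTorsion I M) := by
  have := h.isPrime
  obtain ⟨m, hm⟩ := h.2
  refine ⟨h.isPrime, Submodule.Quotient.mk m, le_antisymm ?_ ?_⟩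
  · rw [bot_colon_mk, hm]
    exact Ideal.radical_mono (colon_mono bot_le subset_rfl)
  · rw [bot_colon_mk, h.isPrime.radical_le_iff]
    exact colon_gammaTorsion_le_of_bot_colon_le hI (hm ▸ Ideal.le_radical)

theorem isAssociatedPrime_quotient_gammaTorsion_iff [IsNoetherianRing R] :
    IsAssociatedPrime p (M ⧸ gammaTorsion I M) ↔ IsAssociatedPrime p M ∧ ¬ I ≤ p := by
  refine ⟨fun h => ?_, fun ⟨h, hI⟩ => h.quotient_gammaTorsion hI⟩
  obtain ⟨hp, x, hpx⟩ := isAssociatedPrime_iff.mp h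
  obtain ⟨m, rfl⟩ := Submodule.Quotient.mk_surjective _ x
  rw [bot_colon_mk] at hpx
  obtain ⟨n, hn⟩ :=
    exists_pow_mul_le_bot_colon_of_le_colon_gammaTorsion (IsNoetherian.noetherian p) hpx.le
  have hI : ¬ I ≤ p := not_le_of_eq_colon_gammaTorsion hpx hn
  obtain ⟨s, hs, hsp⟩ := Ideal.exists_mem_pow_notMem_of_not_le hI n
  refine ⟨isAssociatedPrime_iff.mpr ⟨hp, s • m, eq_bot_colon_smul_of_eq_colon hpx hsp ?_⟩, hI⟩
  exact fun r hr => (mem_bot R).mp (mem_colon_singleton.mp (hn (mul_mem_mul hs hr)))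

end

theorem stmt8 (R : Type u) [CommRing R] [IsNoetherianRing R] (I : Ideal R)
    (M : Type u) [AddCommGroup M] [Module R M] :
    associatedPrimes R (M ⧸ gammaTorsion I M) =
      associatedPrimes R M ∩ {p : Ideal R | ¬ I ≤ p} :=
  Set.ext fun _ => isAssociatedPrime_quotient_gammaTorsion_iff
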